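/- arXiv:2408.01382 — 2 statements merged into one kernel-verified Lean document; each statement's English description precedes it below -/
import Mathlib

section
/- The vector-valued Shapley value satisfies efficiency: for every game v : Finset I → ℝ^m, the sum over all features i ∈ I of φ_i(v) equals v(I) − v(∅), where I is the full index set. (In the paper's terms: the perturbation of all Shapley compositions moves the base distribution to the predicted distribution.) -/
/-- The set of indices strictly preceding `i` in the ordering induced by the
permutation `π` of `Fin d` (where `π.symm i` is the position of player `i`). -/
def precede {d : ℕ} (π : Equiv.Perm (Fin d)) (i : Fin d) : Finset (Fin d) :=
  Finset.univ.filter (fun j => π.symm j < π.symm i)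

/-- The vector-valued Shapley value of feature `i` for the game
`v : Finset (Fin d) → (Fin m → ℝ)`:
`φ_i(v) = (1/d!) · Σ_π (v(π^{<i} ∪ {i}) − v(π^{<i}))`. -/
noncomputable def shapley {d m : ℕ} (v : Finset (Fin d) → (Fin m → ℝ)) (i : Fin d) :
    Fin m → ℝ :=
  ((d.factorial : ℝ))⁻¹ •
    ∑ π : Equiv.Perm (Fin d), (v (insert i (precede π i)) - v (precede π i))

/-!
For a fixed ordering `π`, the players `π 0, π 1, …, π (d-1)` enter one at a time,
and the marginal contribution of `π k` is `v(first k+1 players) - v(first k players)`; summed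
over `k` this telescopes to `v(I) - v(∅)`. The Shapley values average these sums over all `d!`
orderings, so their sum is the average of the constant `v(I) - v(∅)`.
-/

open Finset

section Prefix

variable {d : ℕ} (π : Equiv.Perm (Fin d))

def prefixOf (n : ℕ) : Finset (Fin d) :=
  univ.filter fun j => (π.symm j : ℕ) < n

@[simp]
theorem prefixOf_zero : prefixOf π 0 = ∅ := by
  simp [prefixOf]

@[simp]
theorem prefixOf_self : prefixOf π d = univ := by
  simp [prefixOf]

theorem precede_apply (k : Fin d) : precede π (π k) = prefixOf π k := by
  ext j
  simp [precede, prefixOf]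

theorem insert_precede_apply (k : Fin d) :
    insert (π k) (precede π (π k)) = prefixOf π (k + 1) := by
  ext j
  simp only [precede_apply, prefixOf, mem_insert, mem_filter, mem_univ, true_and,
    Nat.lt_succ_iff_lt_or_eq, ← Fin.ext_iff, Equiv.symm_apply_eq, or_comm]

theorem sum_marginal_contributions {M : Type*} [AddCommGroup M] (v : Finset (Fin d) → M) :
    ∑ i, (v (insert i (precede π i)) - v (precede π i)) = v univ - v ∅ := by
  calc ∑ i, (v (insert i (precede π i)) - v (precede π i))
      = ∑ k : Fin d, (v (prefixOf π (k + 1)) - v (prefixOf π k)) := by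
        rw [← Equiv.sum_comp π]
        exact sum_congr rfl fun k _ => by rw [insert_precede_apply, precede_apply]
    _ = ∑ n ∈ range d, (v (prefixOf π (n + 1)) - v (prefixOf π n)) :=
        Fin.sum_univ_eq_sum_range (fun n => v (prefixOf π (n + 1)) - v (prefixOf π n)) d
    _ = v univ - v ∅ := by
        rw [sum_range_sub (fun n => v (prefixOf π n)), prefixOf_self, prefixOf_zero]

end Prefix

theorem shapley_efficiency_general (d m : ℕ)
    (v : Finset (Fin d) → (Fin m → ℝ)) :
    ∑ i : Fin d, shapley v i = v Finset.univ - v ∅ := by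
  have hd : (d.factorial : ℝ) ≠ 0 := by positivity
  simp only [shapley, ← smul_sum]
  rw [sum_comm]
  simp only [sum_marginal_contributions, sum_const, card_univ, Fintype.card_perm, Fintype.card_fin,
    ← Nat.cast_smul_eq_nsmul ℝ, smul_smul, inv_mul_cancel₀ hd, one_smul]

/-- Efficiency: the Shapley values of all features sum to `v(I) − v(∅)`. -/
theorem shapley_efficiency (d m : ℕ) (hd : 1 ≤ d)
    (v : Finset (Fin d) → (Fin m → ℝ)) :
    ∑ i : Fin d, shapley v i = v Finset.univ - v ∅ :=
  shapley_efficiency_general d m v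
end

section
/- Unit-norm class-composition: let D ≥ 2, k ∈ {1, …, D} and 0 < p < 1/D. The Aitchison norm of the k-class-composition c^{(k)}(p) equals 1 if and only if p = exp(−√(D/(D−1))) / (1 + (D−1)·exp(−√(D/(D−1)))). In particular, this value of p satisfies 0 < p < 1/D and the i-th entry of the resulting unit-norm class-composition is (1/(1 + (D−1)exp(−√(D/(D−1))))) · (1 if i = k, exp(−√(D/(D−1))) otherwise). -/
open Real

/-- The Aitchison norm of a vector `x ∈ ℝ^D` with strictly positive entries:
`‖x‖_A = √( (1/(2D)) Σ_i Σ_j (log(x_i/x_j))² )`. -/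
noncomputable def aitchisonNorm (D : ℕ) (x : Fin D → ℝ) : ℝ :=
  Real.sqrt ((1 / (2 * (D : ℝ))) *
    ∑ i : Fin D, ∑ j : Fin D, (Real.log (x i / x j)) ^ 2)

/-- The `k`-class-composition `c^{(k)}(p) ∈ ℝ^D`: its `k`-th entry is
`1 − (D−1)p` and all its other entries are `p`. -/
noncomputable def classComp (D : ℕ) (k : Fin D) (p : ℝ) : Fin D → ℝ :=
  fun i => if i = k then 1 - ((D : ℝ) - 1) * p else p

/-- The special value `p* = exp(−√(D/(D−1))) / (1 + (D−1)·exp(−√(D/(D−1))))`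
making the class-compositions unit-norm. -/
noncomputable def pstar (D : ℕ) : ℝ :=
  Real.exp (-Real.sqrt ((D : ℝ) / ((D : ℝ) - 1))) /
    (1 + ((D : ℝ) - 1) * Real.exp (-Real.sqrt ((D : ℝ) / ((D : ℝ) - 1))))

/-!
The composition `c^{(k)}(p)` has only two distinct log-ratios, `±L` with `L = log((1 - (D-1)p)/p)`,
each occurring for `D - 1` ordered pairs, so `‖c^{(k)}(p)‖_A² = (D-1)/D · L²`. For `p < 1/D` we have
`L ≥ 0`, so the norm is `1` exactly when `L = √(D/(D-1))`, i.e. when `(1 - (D-1)p)/p = exp √(D/(D-1))`,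
which solves to `p = 1/(exp √(D/(D-1)) + D - 1) = p*`.
-/

lemma Fin.sum_ite_eq_const (D : ℕ) (k : Fin D) (c d : ℝ) :
    ∑ j : Fin D, (if j = k then c else d) = c + (D - 1) * d := by
  rw [Fintype.sum_eq_add_sum_compl k, if_pos rfl,
    Finset.sum_congr rfl fun j hj => if_neg (Finset.mem_compl.1 hj ∘ Finset.mem_singleton.2)]
  simp [Finset.card_compl, Nat.cast_sub k.pos]

section TwoValued

variable {D : ℕ} (k : Fin D) (a b : ℝ)

lemma log_div_ite_sq (i j : Fin D) :
    log ((if i = k then a else b) / (if j = k then a else b)) ^ 2 =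
      if i = k then (if j = k then 0 else log (a / b) ^ 2)
      else (if j = k then log (a / b) ^ 2 else 0) := by
  split_ifs
  · rw [log_div_self, sq, mul_zero]
  · rfl
  · rw [← inv_div, log_inv, neg_sq]
  · rw [log_div_self, sq, mul_zero]

lemma sum_sum_log_div_ite_sq :
    ∑ i : Fin D, ∑ j : Fin D,
      log ((if i = k then a else b) / (if j = k then a else b)) ^ 2 =
      2 * (D - 1) * log (a / b) ^ 2 := by
  have inner (i : Fin D) : ∑ j : Fin D,
      log ((if i = k then a else b) / (if j = k then a else b)) ^ 2 =
      if i = k then (D - 1) * log (a / b) ^ 2 else log (a / b) ^ 2 := by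
    simp only [log_div_ite_sq]
    split_ifs <;> simp [Fin.sum_ite_eq_const]
  simp only [inner, Fin.sum_ite_eq_const]
  ring

lemma aitchisonNorm_ite :
    aitchisonNorm D (fun i => if i = k then a else b) = √((D - 1) / D * log (a / b) ^ 2) := by
  have hD : (D : ℝ) ≠ 0 := by exact_mod_cast k.pos.ne'
  rw [aitchisonNorm, sum_sum_log_div_ite_sq]
  field_simp

end TwoValued

lemma sqrt_sub_one_div_mul_sq_eq_one_iff {D L : ℝ} (hD : 1 < D) (hL : 0 ≤ L) :
    √((D - 1) / D * L ^ 2) = 1 ↔ L = √(D / (D - 1)) := by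
  have hD₀ : D ≠ 0 := by positivity
  have hD₁ : D - 1 ≠ 0 := by linarith
  rw [sqrt_eq_one, eq_comm (a := L), sqrt_eq_iff_eq_sq (by positivity) hL]
  constructor <;> intro h
  · field_simp at h ⊢; linarith
  · rw [← h]; field_simp

lemma log_one_sub_mul_div_eq_iff {c p t : ℝ} (hc : 0 ≤ c) (hp : 0 < p) (hcp : 0 < 1 - c * p) :
    log ((1 - c * p) / p) = t ↔ p = 1 / (exp t + c) := by
  have hden : 0 < exp t + c := by positivity
  rw [← exp_eq_exp, exp_log (div_pos hcp hp), div_eq_iff hp.ne', eq_div_iff hden.ne']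
  constructor <;> intro h <;> linarith

lemma exp_neg_div_one_add_mul_exp_neg (t c : ℝ) :
    exp (-t) / (1 + c * exp (-t)) = 1 / (exp t + c) := by
  have h : 1 + c * exp (-t) = exp (-t) * (exp t + c) := by
    rw [mul_add, ← exp_add, neg_add_cancel, exp_zero, mul_comm]
  rw [h, div_mul_cancel_left₀ (exp_pos _).ne', one_div]

lemma classComp_div_one_add_mul (D : ℕ) (k : Fin D) {e : ℝ} (he : 1 + (D - 1) * e ≠ 0)
    (i : Fin D) :
    classComp D k (e / (1 + (D - 1) * e)) i =
      1 / (1 + (D - 1) * e) * (if i = k then 1 else e) := by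
  unfold classComp
  split_ifs
  · field_simp; ring
  · ring

/-- Unit-norm class-composition: for `0 < p < 1/D`, the Aitchison norm of
`c^{(k)}(p)` equals `1` iff `p = p*`; moreover `0 < p* < 1/D` and the `i`-th
entry of the resulting unit-norm class-composition is
`(1/(1 + (D−1)exp(−√(D/(D−1))))) · (1 if i = k, exp(−√(D/(D−1))) otherwise)`. -/
theorem aitchisonNorm_classComp_eq_one_iff (D : ℕ) (hD : 2 ≤ D) (k : Fin D) :
    (∀ p : ℝ, 0 < p → p < 1 / (D : ℝ) →
      (aitchisonNorm D (classComp D k p) = 1 ↔ p = pstar D)) ∧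
    (0 < pstar D ∧ pstar D < 1 / (D : ℝ)) ∧
    (∀ i : Fin D, classComp D k (pstar D) i
      = (1 / (1 + ((D : ℝ) - 1) * Real.exp (-Real.sqrt ((D : ℝ) / ((D : ℝ) - 1))))) *
          (if i = k then 1 else Real.exp (-Real.sqrt ((D : ℝ) / ((D : ℝ) - 1))))) := by
  have hD₁ : (1 : ℝ) < D := by exact_mod_cast hD
  set s := √((D : ℝ) / (D - 1))
  have hs : 0 < s := sqrt_pos.2 (div_pos (by linarith) (by linarith))
  have hpstar : pstar D = 1 / (exp s + (D - 1)) := exp_neg_div_one_add_mul_exp_neg _ _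
  refine ⟨fun p hp hpD => ?_, ⟨?_, ?_⟩, classComp_div_one_add_mul D k (by positivity)⟩
  · have hDp : D * p < 1 := by rwa [lt_div_iff₀' (by linarith)] at hpD
    have hL : 0 ≤ log ((1 - (D - 1) * p) / p) :=
      log_nonneg (by rw [le_div_iff₀ hp]; linarith)
    unfold classComp
    rw [aitchisonNorm_ite, sqrt_sub_one_div_mul_sq_eq_one_iff hD₁ hL,
      log_one_sub_mul_div_eq_iff (by linarith) hp (by linarith), hpstar]
  · rw [hpstar]; positivity
  · rw [hpstar]
    apply one_div_lt_one_div_of_lt (by linarith)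
    linarith [add_one_lt_exp hs.ne']
end
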